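/- Let d ≥ 1, let Λ be a finite nonempty type, and let (F, G) be a dual frame pair of families Λ → Matrix (Fin d) (Fin d) ℂ. For matrices U, V and any pair of families (F', G') set N_V^{(F,G)|(F',G')} := max_{λ} Σ_{λ'} |Tr(F(λ') * V * G'(λ) * Vᴴ)| and N_U^{(F',G')|(F,G)} := max_{λ} Σ_{λ'} |Tr(F'(λ') * U * G(λ) * Uᴴ)|, and let N_{VU} := max_{λ} Σ_{λ'} |Tr(F(λ') * (V*U) * G(λ) * (V*U)ᴴ)|. Let S ⊆ ℝ be the set of products N_V^{(F,G)|(F',G')} · N_U^{(F',G')|(F,G)} as (F', G') ranges over all dual frame pairs indexed by Λ. Then N_V^{(F,G)|(F,G)} · N_U^{(F,G)|(F,G)} ≥ sInf S and sInf S ≥ N_{VU}. -/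

import Mathlib

open Matrix

/-!
Expanding the intermediate state `U G(λ) Uᴴ` in a dual frame pair `(F', G')` factorises the
transition matrix of `V * U` as `W_V^{(F,G)|(F',G')} * W_U^{(F',G')|(F,G)}`. The negativity is
the maximal column `ℓ¹`-norm of the transition matrix, i.e. the `ℓ∞` operator norm of its
transpose, so it is submultiplicative. Hence `N_{VU}` is a lower bound for every product over
intermediate frames, while the product for `(F', G') = (F, G)` is one element of that set.
-/

/-- A dual frame pair: families `F G : Λ → Matrix (Fin d) (Fin d) ℂ` such that
every matrix `O` satisfies `O = Σ_λ Tr(F(λ) * O) • G(λ)`. -/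
def IsDualFramePair {d : ℕ} {Λ : Type*} [Fintype Λ]
    (F G : Λ → Matrix (Fin d) (Fin d) ℂ) : Prop :=
  ∀ O : Matrix (Fin d) (Fin d) ℂ, O = ∑ lam : Λ, (F lam * O).trace • G lam

/-- The negativity of a gate `U` with output frame operators `Fout` and input
dual frame operators `Gin`:
`max_λ Σ_λ' |Tr(Fout(λ') * U * Gin(λ) * Uᴴ)|`. -/
noncomputable def gateNegativity {d : ℕ} {Λ : Type*} [Fintype Λ] [Nonempty Λ]
    (Fout Gin : Λ → Matrix (Fin d) (Fin d) ℂ) (U : Matrix (Fin d) (Fin d) ℂ) : ℝ :=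
  Finset.univ.sup' Finset.univ_nonempty fun lam : Λ =>
    ∑ lam' : Λ, ‖(Fout lam' * U * Gin lam * Uᴴ).trace‖

/-- The transition quasi-probability `W_U(λ'|λ)`, with the output label `λ'` as row index. -/
def transitionMatrix {d : ℕ} {Λ : Type*} (Fout Gin : Λ → Matrix (Fin d) (Fin d) ℂ)
    (U : Matrix (Fin d) (Fin d) ℂ) : Matrix Λ Λ ℂ :=
  Matrix.of fun lam' lam => (Fout lam' * U * Gin lam * Uᴴ).trace

attribute [local instance] Matrix.linftyOpSeminormedAddCommGroup

lemma gateNegativity_eq_norm_transpose {d : ℕ} {Λ : Type*} [Fintype Λ] [Nonempty Λ]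
    (Fout Gin : Λ → Matrix (Fin d) (Fin d) ℂ) (U : Matrix (Fin d) (Fin d) ℂ) :
    gateNegativity Fout Gin U = ‖(transitionMatrix Fout Gin U)ᵀ‖ := by
  rw [linfty_opNorm_def, ← Finset.sup'_eq_sup Finset.univ_nonempty,
    Finset.apply_sup'_eq_sup'_comp _ _ NNReal.coe_max, gateNegativity]
  simp [transitionMatrix, Function.comp_def]

lemma IsDualFramePair.trace_mul_mul_eq_sum {d : ℕ} {Λ : Type*} [Fintype Λ]
    {F G : Λ → Matrix (Fin d) (Fin d) ℂ} (h : IsDualFramePair F G)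
    (X O Y : Matrix (Fin d) (Fin d) ℂ) :
    (X * O * Y).trace = ∑ mu, (F mu * O).trace * (X * G mu * Y).trace := by
  conv_lhs => rw [h O]
  simp [Matrix.mul_sum, Matrix.sum_mul, trace_sum, Matrix.mul_assoc]

lemma transitionMatrix_mul {d : ℕ} {Λ : Type*} [Fintype Λ]
    (F G : Λ → Matrix (Fin d) (Fin d) ℂ) {F' G' : Λ → Matrix (Fin d) (Fin d) ℂ}
    (h : IsDualFramePair F' G') (U V : Matrix (Fin d) (Fin d) ℂ) :
    transitionMatrix F G (V * U) = transitionMatrix F G' V * transitionMatrix F' G U := by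
  ext lam'' lam
  have hsplit : F lam'' * (V * U) * G lam * (V * U)ᴴ
      = F lam'' * V * (U * G lam * Uᴴ) * Vᴴ := by
    simp only [conjTranspose_mul, Matrix.mul_assoc]
  rw [transitionMatrix, of_apply, hsplit, h.trace_mul_mul_eq_sum, mul_apply]
  simp only [transitionMatrix, of_apply, Matrix.mul_assoc, mul_comm]

lemma gateNegativity_mul_le {d : ℕ} {Λ : Type*} [Fintype Λ] [Nonempty Λ]
    (F G : Λ → Matrix (Fin d) (Fin d) ℂ) {F' G' : Λ → Matrix (Fin d) (Fin d) ℂ}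
    (h : IsDualFramePair F' G') (U V : Matrix (Fin d) (Fin d) ℂ) :
    gateNegativity F G (V * U) ≤ gateNegativity F G' V * gateNegativity F' G U := by
  simp only [gateNegativity_eq_norm_transpose, transitionMatrix_mul F G h, transpose_mul]
  rw [mul_comm]
  exact linfty_opNorm_mul _ _

theorem frame_optimisation_bounds_general
    {d : ℕ} {Λ : Type*} [Fintype Λ] [Nonempty Λ]
    (F G : Λ → Matrix (Fin d) (Fin d) ℂ)
    (hdual : IsDualFramePair F G)
    (U V : Matrix (Fin d) (Fin d) ℂ)
    (S : Set ℝ)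
    (hS : S = {x : ℝ | ∃ F' G' : Λ → Matrix (Fin d) (Fin d) ℂ,
      IsDualFramePair F' G' ∧
      x = gateNegativity F G' V * gateNegativity F' G U}) :
    gateNegativity F G V * gateNegativity F G U ≥ sInf S ∧
      sInf S ≥ gateNegativity F G (V * U) := by
  have hmem : gateNegativity F G V * gateNegativity F G U ∈ S := hS ▸ ⟨F, G, hdual, rfl⟩
  have hlower : gateNegativity F G (V * U) ∈ lowerBounds S := by
    rw [hS]
    rintro _ ⟨F', G', hdual', rfl⟩
    exact gateNegativity_mul_le F G hdual' U V
  exact ⟨csInf_le ⟨_, hlower⟩ hmem, le_csInf ⟨_, hmem⟩ hlower⟩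

/-- Theorem 1 of the paper: for two consecutive gates `U` and `V` with a dual
frame pair `(F, G)` on the outer wires,
`N_V^{G|G} N_U^{G|G} ≥ min_{G'} N_V^{G|G'} N_U^{G'|G} ≥ N_{VU}^{G|G}`,
where the minimum (infimum) ranges over all dual frame pairs `(F', G')`
assigned to the intermediate wire. -/
theorem frame_optimisation_bounds
    {d : ℕ} (hd : 1 ≤ d) {Λ : Type*} [Fintype Λ] [Nonempty Λ]
    (F G : Λ → Matrix (Fin d) (Fin d) ℂ)
    (hdual : IsDualFramePair F G)
    (U V : Matrix (Fin d) (Fin d) ℂ)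
    (S : Set ℝ)
    (hS : S = {x : ℝ | ∃ F' G' : Λ → Matrix (Fin d) (Fin d) ℂ,
      IsDualFramePair F' G' ∧
      x = gateNegativity F G' V * gateNegativity F' G U}) :
    gateNegativity F G V * gateNegativity F G U ≥ sInf S ∧
      sInf S ≥ gateNegativity F G (V * U) :=
  frame_optimisation_bounds_general F G hdual U V S hS
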